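/- Let θ be a conjugate-linear anti-involution of the Schrödinger–Virasoro Lie algebra 𝔰𝔳 and α ∈ ℝ∖{0} such that θ(L_n) − αⁿ·L_{−n} ∈ M ⊕ Y for all n ∈ ℤ, where M = span_ℂ{M_n : n ∈ ℤ} and Y = span_ℂ{Y_{n+1/2} : n ∈ ℤ}. Then θ(c) = c, and there exists μ ∈ ℂ with |μ| = 1 such that θ(M_n) = μ·αⁿ·M_{−n} for all n ∈ ℤ. -/

import Mathlib

/-!
Write θ(L_n) = αⁿ (L_{-n} + v_n) with v_n ∈ M ⊕ Y. Applying θ to [L_m, L_n] turns the Virasoro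
relations into a cocycle identity for the v_n, and the rest is read off from ad L₀-weights.
θ(Y_n) lies in M ⊕ Y, so θ(M_1) = ½[θY_1, θY_{-1}] lies in M and has weight -1, hence is a
multiple of M_{-1}; bracketing with L_{n-1} gives θ(M_n) = μ αⁿ M_{-n}, and |μ| = 1 since θ² = id.
Likewise θ(c) - c is a weight-zero element of M ⊕ Y, so θ(c) = c + β M_0.
The Y-components of all v_n come from a single g ∈ Y, v_n ≡ 2 [L_{-n}, g] mod M, so the
M_{-n}-coefficients a_n of the v_n satisfy
  (n - m) a_{m+n} + δ_{m+n,0} (m³ - m)/12 · β = n a_n - m a_m + (a quadratic term in g).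
Eliminating the a_n from six of these relations leaves β as the value at (g, g) of a bilinear
form that is alternating on Y, so β = 0.
-/

/-- Index type for the distinguished basis of the Schrödinger–Virasoro algebra.
`Y n` stands for the basis element `Y_{n+1/2}`. -/
inductive SVIndex : Type
  | L : ℤ → SVIndex
  | M : ℤ → SVIndex
  | Y : ℤ → SVIndex
  | c : SVIndex

/-- A realization of the Schrödinger–Virasoro Lie algebra: a complex Lie algebra `sv`
with distinguished elements `L n`, `M n`, `Y n` (representing `Y_{n+1/2}`) and `c`
which form a basis and satisfy the defining bracket relations. -/
structure SVAlgebra (sv : Type*) [LieRing sv] [LieAlgebra ℂ sv] where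
  L : ℤ → sv
  M : ℤ → sv
  Y : ℤ → sv
  c : sv
  indep : LinearIndependent ℂ (fun i : SVIndex =>
    match i with
    | .L n => L n
    | .M n => M n
    | .Y n => Y n
    | .c => c)
  span_top : Submodule.span ℂ (Set.range (fun i : SVIndex =>
    match i with
    | .L n => L n
    | .M n => M n
    | .Y n => Y n
    | .c => c)) = ⊤
  bracket_LL : ∀ m n : ℤ, ⁅L m, L n⁆ =
    ((n : ℂ) - (m : ℂ)) • L (m + n)
      + (if m + n = 0 then ((m : ℂ) ^ 3 - (m : ℂ)) / 12 else 0) • c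
  bracket_LM : ∀ m n : ℤ, ⁅L m, M n⁆ = (n : ℂ) • M (m + n)
  bracket_LY : ∀ m n : ℤ, ⁅L m, Y n⁆ = ((n : ℂ) + (1 - (m : ℂ)) / 2) • Y (m + n)
  bracket_YY : ∀ m n : ℤ, ⁅Y m, Y n⁆ = ((n : ℂ) - (m : ℂ)) • M (m + n + 1)
  bracket_MM : ∀ m n : ℤ, ⁅M m, M n⁆ = 0
  bracket_MY : ∀ m n : ℤ, ⁅M m, Y n⁆ = 0
  bracket_c : ∀ x : sv, ⁅x, c⁆ = 0

/-- A conjugate-linear anti-involution of a complex Lie algebra. -/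
structure ConjAntiInvolution (sv : Type*) [LieRing sv] [LieAlgebra ℂ sv] where
  toFun : sv → sv
  map_add' : ∀ x y : sv, toFun (x + y) = toFun x + toFun y
  map_smul' : ∀ (a : ℂ) (x : sv), toFun (a • x) = (starRingEnd ℂ a) • toFun x
  map_bracket' : ∀ x y : sv, toFun ⁅x, y⁆ = ⁅toFun y, toFun x⁆
  invol' : ∀ x : sv, toFun (toFun x) = x

open Module Submodule

lemma intCast_add_half_ne_zero (n : ℤ) : (n : ℂ) + 1 / 2 ≠ 0 := by
  intro h
  have : ((2 * n + 1 : ℤ) : ℂ) = 0 := by push_cast; linear_combination 2 * h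
  have : 2 * n + 1 = 0 := by exact_mod_cast this
  omega

lemma Module.Basis.mem_span_image_iff_repr_eq_zero {ι R M : Type*} [Semiring R]
    [AddCommMonoid M] [Module R M] (b : Basis ι R M) {s : Set ι} {x : M} :
    x ∈ span R (b '' s) ↔ ∀ i ∉ s, b.repr x i = 0 := by
  simp only [b.mem_span_image, Set.subset_def, Finset.mem_coe, Finsupp.mem_support_iff]
  exact forall_congr' fun i => not_imp_comm

namespace ConjAntiInvolution

variable {sv : Type*} [LieRing sv] [LieAlgebra ℂ sv] (θ : ConjAntiInvolution sv)

lemma map_zero : θ.toFun 0 = 0 := by simpa using θ.map_smul' 0 0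

lemma norm_eq_one_of_map_eq_smul {x : sv} (hx : x ≠ 0) {μ : ℂ} (h : θ.toFun x = μ • x) :
    ‖μ‖ = 1 := by
  have hx' : (starRingEnd ℂ μ * μ) • x = (1 : ℂ) • x := by
    rw [one_smul, mul_smul, ← h, ← θ.map_smul', ← h, θ.invol']
  have h1 : ((‖μ‖ ^ 2 : ℝ) : ℂ) = 1 := by
    push_cast
    rw [← Complex.conj_mul']
    exact smul_left_injective ℂ hx hx'
  exact (pow_eq_one_iff_of_nonneg (norm_nonneg μ) two_ne_zero).mp (by exact_mod_cast h1)

end ConjAntiInvolution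

namespace SVIndex

noncomputable def weight : SVIndex → ℂ
  | L n => n
  | M n => n
  | Y n => n + 1 / 2
  | c => 0

end SVIndex

noncomputable instance : DecidableEq SVIndex := Classical.decEq _

namespace SVAlgebra

variable {sv : Type*} [LieRing sv] [LieAlgebra ℂ sv] (A : SVAlgebra sv)

def basisFun : SVIndex → sv
  | .L n => A.L n
  | .M n => A.M n
  | .Y n => A.Y n
  | .c => A.c

noncomputable def basis : Basis SVIndex ℂ sv :=
  Basis.mk (v := A.basisFun) A.indep A.span_top.ge

@[simp] lemma basis_apply (i : SVIndex) : A.basis i = A.basisFun i := Basis.mk_apply _ _ i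

lemma repr_basisFun (i j : SVIndex) : A.basis.repr (A.basisFun i) j = if i = j then 1 else 0 := by
  rw [← basis_apply, Basis.repr_self, Finsupp.single_apply]

@[simp] lemma repr_L (n : ℤ) (j : SVIndex) :
    A.basis.repr (A.L n) j = if .L n = j then 1 else 0 := A.repr_basisFun (.L n) j

@[simp] lemma repr_M (n : ℤ) (j : SVIndex) :
    A.basis.repr (A.M n) j = if .M n = j then 1 else 0 := A.repr_basisFun (.M n) j

@[simp] lemma repr_Y (n : ℤ) (j : SVIndex) :
    A.basis.repr (A.Y n) j = if .Y n = j then 1 else 0 := A.repr_basisFun (.Y n) j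

@[simp] lemma repr_c (j : SVIndex) :
    A.basis.repr A.c j = if .c = j then 1 else 0 := A.repr_basisFun .c j

lemma M_ne_zero (n : ℤ) : A.M n ≠ 0 := by
  simpa [basisFun] using A.basis.ne_zero (.M n)

lemma lie_L_zero_basisFun (i : SVIndex) : ⁅A.L 0, A.basisFun i⁆ = i.weight • A.basisFun i := by
  cases i with
  | L n => simp [basisFun, SVIndex.weight, A.bracket_LL]
  | M n => simp [basisFun, SVIndex.weight, A.bracket_LM]
  | Y n => simp [basisFun, SVIndex.weight, A.bracket_LY]
  | c => simp [basisFun, SVIndex.weight, A.bracket_c]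

lemma repr_lie_L_zero (x : sv) (i : SVIndex) :
    A.basis.repr ⁅A.L 0, x⁆ i = i.weight * A.basis.repr x i := by
  have h : (A.basis.coord i).comp (LieModule.toEnd ℂ sv sv (A.L 0)) = i.weight • A.basis.coord i :=
    A.basis.ext fun j => by
      simp only [LinearMap.comp_apply, LieModule.toEnd_apply_apply, basis_apply,
        lie_L_zero_basisFun, LinearMap.smul_apply, map_smul, Basis.coord_apply, repr_basisFun]
      split_ifs with h <;> simp [h]
  simpa using LinearMap.congr_fun h x

lemma repr_lie_L_M (r k : ℤ) (x : sv) :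
    A.basis.repr ⁅A.L r, x⁆ (.M k) = ((k : ℂ) - r) * A.basis.repr x (.M (k - r)) := by
  have h : (A.basis.coord (.M k)).comp (LieModule.toEnd ℂ sv sv (A.L r)) =
      ((k : ℂ) - r) • A.basis.coord (.M (k - r)) :=
    A.basis.ext fun j => by
      cases j with
      | M n =>
        simp [basisFun, A.bracket_LM]
        split_ifs <;> first | omega | (subst_vars; push_cast; ring)
      | _ => simp [basisFun, A.bracket_LL, A.bracket_LY, A.bracket_c, apply_ite]
  simpa using LinearMap.congr_fun h x

lemma repr_lie_L_Y (r k : ℤ) (x : sv) :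
    A.basis.repr ⁅A.L r, x⁆ (.Y k) =
      ((k : ℂ) - r + (1 - r) / 2) * A.basis.repr x (.Y (k - r)) := by
  have h : (A.basis.coord (.Y k)).comp (LieModule.toEnd ℂ sv sv (A.L r)) =
      ((k : ℂ) - r + (1 - r) / 2) • A.basis.coord (.Y (k - r)) :=
    A.basis.ext fun j => by
      cases j with
      | Y n =>
        simp [basisFun, A.bracket_LY]
        split_ifs <;> first | omega | (subst_vars; push_cast; ring)
      | _ => simp [basisFun, A.bracket_LL, A.bracket_LM, A.bracket_c, apply_ite]
  simpa using LinearMap.congr_fun h x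

lemma c_lie (x : sv) : ⁅A.c, x⁆ = 0 := by rw [← lie_skew, A.bracket_c, neg_zero]

lemma Y_lie_M (m n : ℤ) : ⁅A.Y m, A.M n⁆ = 0 := by rw [← lie_skew, A.bracket_MY, neg_zero]

def spanM : Submodule ℂ sv := span ℂ (Set.range A.M)

def spanY : Submodule ℂ sv := span ℂ (Set.range A.Y)

def spanMY : Submodule ℂ sv := span ℂ (Set.range A.M ∪ Set.range A.Y)

@[simp] lemma M_mem_spanM (n : ℤ) : A.M n ∈ A.spanM := subset_span ⟨n, rfl⟩

@[simp] lemma M_mem_spanMY (n : ℤ) : A.M n ∈ A.spanMY := subset_span (.inl ⟨n, rfl⟩)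

@[simp] lemma Y_mem_spanMY (n : ℤ) : A.Y n ∈ A.spanMY := subset_span (.inr ⟨n, rfl⟩)

lemma spanM_le_spanMY : A.spanM ≤ A.spanMY := span_mono Set.subset_union_left

lemma spanY_le_spanMY : A.spanY ≤ A.spanMY := span_mono Set.subset_union_right

lemma basis_comp_M : ⇑A.basis ∘ SVIndex.M = A.M := funext fun n => A.basis_apply (.M n)

lemma basis_comp_Y : ⇑A.basis ∘ SVIndex.Y = A.Y := funext fun n => A.basis_apply (.Y n)

lemma mem_spanM_iff {x : sv} :
    x ∈ A.spanM ↔ ∀ i ∉ Set.range SVIndex.M, A.basis.repr x i = 0 := by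
  rw [← A.basis.mem_span_image_iff_repr_eq_zero, ← Set.range_comp, basis_comp_M]
  rfl

lemma mem_spanMY_iff {x : sv} :
    x ∈ A.spanMY ↔ ∀ i ∉ Set.range SVIndex.M ∪ Set.range SVIndex.Y, A.basis.repr x i = 0 := by
  rw [← A.basis.mem_span_image_iff_repr_eq_zero, Set.image_union, ← Set.range_comp,
    ← Set.range_comp, basis_comp_M, basis_comp_Y]
  rfl

lemma lie_mem_spanMY (z : sv) {x : sv} (hx : x ∈ A.spanMY) : ⁅z, x⁆ ∈ A.spanMY := by
  have hz : z ∈ span ℂ (Set.range A.basisFun) := A.span_top ▸ mem_top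
  refine LinearMap.BilinMap.apply_apply_mem_of_mem_span _ _ _
    (LieModule.toEnd ℂ sv sv : sv →ₗ[ℂ] Module.End ℂ sv) ?_ z x hz hx
  rintro _ ⟨i, rfl⟩ _ (⟨n, rfl⟩ | ⟨n, rfl⟩) <;> cases i <;>
    simp [basisFun, A.bracket_LM, A.bracket_LY, A.bracket_MM, A.bracket_MY, A.bracket_YY,
      A.Y_lie_M, A.c_lie, Submodule.smul_mem]

lemma lie_mem_spanM {x y : sv} (hx : x ∈ A.spanMY) (hy : y ∈ A.spanMY) : ⁅x, y⁆ ∈ A.spanM := by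
  refine LinearMap.BilinMap.apply_apply_mem_of_mem_span _ _ _
    (LieModule.toEnd ℂ sv sv : sv →ₗ[ℂ] Module.End ℂ sv) ?_ x y hx hy
  rintro _ (⟨m, rfl⟩ | ⟨m, rfl⟩) _ (⟨n, rfl⟩ | ⟨n, rfl⟩) <;>
    simp [A.bracket_MM, A.bracket_MY, A.bracket_YY, A.Y_lie_M, Submodule.smul_mem]

lemma lie_eq_zero_of_mem_spanM {x y : sv} (hx : x ∈ A.spanM) (hy : y ∈ A.spanMY) : ⁅x, y⁆ = 0 := by
  refine (mem_bot ℂ).mp (LinearMap.BilinMap.apply_apply_mem_of_mem_span _ _ _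
    (LieModule.toEnd ℂ sv sv : sv →ₗ[ℂ] Module.End ℂ sv) ?_ x y hx hy)
  rintro _ ⟨m, rfl⟩ _ (⟨n, rfl⟩ | ⟨n, rfl⟩) <;> simp [A.bracket_MM, A.bracket_MY]

lemma lie_eq_zero_of_mem_spanM' {x y : sv} (hx : x ∈ A.spanMY) (hy : y ∈ A.spanM) : ⁅x, y⁆ = 0 := by
  rw [← lie_skew, A.lie_eq_zero_of_mem_spanM hy hx, neg_zero]

lemma lie_eq_of_sub_mem_spanM {x x' y y' : sv} (hx' : x' ∈ A.spanMY) (hy' : y' ∈ A.spanMY)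
    (hx : x - x' ∈ A.spanM) (hy : y - y' ∈ A.spanM) : ⁅x, y⁆ = ⁅x', y'⁆ := by
  calc ⁅x, y⁆ = ⁅x' + (x - x'), y' + (y - y')⁆ := by simp
    _ = ⁅x', y'⁆ := by
      rw [add_lie, lie_add, lie_add, A.lie_eq_zero_of_mem_spanM hx hy',
        A.lie_eq_zero_of_mem_spanM hx (A.spanM_le_spanMY hy), A.lie_eq_zero_of_mem_spanM' hx' hy]
      simp

lemma mem_spanMY_of_lie_L_zero_add_smul_mem (n : ℤ) {x : sv}
    (h : ⁅A.L 0, x⁆ + ((n : ℂ) + 1 / 2) • x ∈ A.spanMY) : x ∈ A.spanMY := by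
  rw [mem_spanMY_iff] at h ⊢
  intro i hi
  have hx := h i hi
  simp only [map_add, map_smul, Finsupp.add_apply, Finsupp.smul_apply, smul_eq_mul,
    repr_lie_L_zero, ← add_mul] at hx
  refine (mul_eq_zero.mp hx).resolve_left fun h0 => ?_
  rcases i with j | j | j | _ <;> simp only [SVIndex.weight] at h0
  · exact intCast_add_half_ne_zero (j + n) (by push_cast; linear_combination h0)
  · simp at hi
  · simp at hi
  · exact intCast_add_half_ne_zero n (by linear_combination h0)

lemma eq_smul_M_of_lie_L_zero_eq_smul {x : sv} (hx : x ∈ A.spanMY) {k : ℤ}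
    (h : ⁅A.L 0, x⁆ = (k : ℂ) • x) : x = A.basis.repr x (.M k) • A.M k := by
  refine A.basis.ext_elem_iff.mpr fun i => ?_
  have hi : (i.weight - k) * A.basis.repr x i = 0 := by
    have := congr_arg (A.basis.repr · i) h
    simp only [repr_lie_L_zero, map_smul, Finsupp.smul_apply, smul_eq_mul] at this
    linear_combination this
  rw [map_smul, Finsupp.smul_apply, repr_M, smul_eq_mul]
  rcases i with j | j | j | _
  · simpa using A.mem_spanMY_iff.mp hx (.L j) (by simp)
  · by_cases hj : k = j
    · simp [hj]
    · have : (j : ℂ) - k ≠ 0 := sub_ne_zero.mpr (by exact_mod_cast Ne.symm hj)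
      simpa [SVIndex.weight, hj, this] using hi
  · have hw : (SVIndex.Y j).weight - k ≠ 0 := fun h0 => by
      simp only [SVIndex.weight] at h0
      exact intCast_add_half_ne_zero (j - k) (by push_cast; linear_combination h0)
    simpa using (mul_eq_zero.mp hi).resolve_left hw
  · simpa using A.mem_spanMY_iff.mp hx .c (by simp)

lemma exists_mem_spanY_repr_Y_eq (x : sv) :
    ∃ g ∈ A.spanY, ∀ s : ℤ, A.basis.repr x (.Y s) = (2 * s + 1) * A.basis.repr g (.Y s) := by
  let f : SVIndex → sv
    | .Y s => (2 * (s : ℂ) + 1)⁻¹ • A.Y s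
    | _ => 0
  refine ⟨A.basis.constr ℂ f x, ?_, fun s => ?_⟩
  · rw [Basis.constr_apply]
    refine sum_mem fun i _ => smul_mem _ _ ?_
    cases i with
    | Y s => exact smul_mem _ _ (subset_span ⟨s, rfl⟩)
    | _ => exact zero_mem _
  · have hs : 2 * (s : ℂ) + 1 ≠ 0 := fun h0 =>
      intCast_add_half_ne_zero s (by linear_combination h0 / 2)
    have h : A.basis.coord (.Y s) = (2 * (s : ℂ) + 1) • (A.basis.coord (.Y s)).comp
        (A.basis.constr ℂ f) := A.basis.ext fun j => by
      simp only [LinearMap.smul_apply, LinearMap.comp_apply, Basis.constr_basis]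
      cases j <;> simp [f, basisFun]
      split_ifs with hj <;> simp [hj, hs]
    simpa using LinearMap.congr_fun h x

noncomputable def bracketForm (a b : ℤ) : sv →ₗ[ℂ] sv →ₗ[ℂ] ℂ :=
  LinearMap.mk₂ ℂ (fun x y => A.basis.repr ⁅⁅A.L a, x⁆, ⁅A.L b, y⁆⁆ (.M (a + b)))
    (fun _ _ _ => by simp [add_lie]) (fun _ _ _ => by simp [smul_lie])
    (fun _ _ _ => by simp) (fun _ _ _ => by simp)

lemma bracketForm_apply (a b : ℤ) (x y : sv) :
    A.bracketForm a b x y = A.basis.repr ⁅⁅A.L a, x⁆, ⁅A.L b, y⁆⁆ (.M (a + b)) := rfl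

lemma bracketForm_Y_Y (a b s t : ℤ) : A.bracketForm a b (A.Y s) (A.Y t) =
    if s + t + 1 = 0 then
      ((s : ℂ) + (1 - a) / 2) * ((t : ℂ) + (1 - b) / 2) * (b + t - a - s) else 0 := by
  rw [bracketForm_apply, A.bracket_LY, A.bracket_LY, lie_smul, smul_lie, A.bracket_YY]
  simp only [map_smul, Finsupp.smul_apply, smul_eq_mul, repr_M, SVIndex.M.injEq]
  split_ifs <;> first | omega | (push_cast; ring)

-- Eliminating the `defectCoeff`s from `defectCoeff_relation` at (m, n) = (1, 2), (-1, 3),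
-- (-1, -2), (1, -3), (1, -1), (2, -2) expresses β as 8 times this form at (g, g).
noncomputable def obstructionForm : sv →ₗ[ℂ] sv →ₗ[ℂ] ℂ :=
  (3 : ℂ) • A.bracketForm (-2) (-1) + A.bracketForm (-3) 1 - (3 : ℂ) • A.bracketForm 2 1
    - A.bracketForm 3 (-1) + A.bracketForm 2 (-2) - (2 : ℂ) • A.bracketForm 1 (-1)

lemma obstructionForm_self_eq_zero {g : sv} (hg : g ∈ A.spanY) : A.obstructionForm g g = 0 := by
  have hsymm : (A.obstructionForm + A.obstructionForm.flip) g g ∈ (⊥ : Submodule ℂ ℂ) := by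
    refine LinearMap.BilinMap.apply_apply_mem_of_mem_span _ _ _ _ ?_ g g hg hg
    rintro _ ⟨s, rfl⟩ _ ⟨t, rfl⟩
    simp only [obstructionForm, LinearMap.add_apply, LinearMap.sub_apply, LinearMap.smul_apply,
      LinearMap.flip_apply, bracketForm_Y_Y, mem_bot, smul_eq_mul]
    by_cases hst : s + t + 1 = 0
    · simp only [hst, show t + s + 1 = 0 by omega, if_true]
      obtain rfl : t = -1 - s := by omega
      push_cast
      ring
    · simp [hst, add_comm t s]
  simp only [LinearMap.add_apply, LinearMap.flip_apply, mem_bot] at hsymm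
  linear_combination hsymm / 2

section Involution

def MapsLModMY (θ : ConjAntiInvolution sv) (α : ℝ) : Prop :=
  ∀ n : ℤ, θ.toFun (A.L n) - (α : ℂ) ^ n • A.L (-n) ∈ A.spanMY

noncomputable def defect (θ : ConjAntiInvolution sv) (α : ℝ) (n : ℤ) : sv :=
  ((α : ℂ) ^ n)⁻¹ • θ.toFun (A.L n) - A.L (-n)

variable {A} {θ : ConjAntiInvolution sv} {α : ℝ}

lemma map_L (hα : α ≠ 0) (n : ℤ) :
    θ.toFun (A.L n) = (α : ℂ) ^ n • (A.L (-n) + A.defect θ α n) := by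
  rw [defect, add_sub_cancel, smul_inv_smul₀ (zpow_ne_zero _ (by exact_mod_cast hα))]

lemma map_L_zero (hα : α ≠ 0) : θ.toFun (A.L 0) = A.L 0 + A.defect θ α 0 := by
  simpa using map_L (A := A) (θ := θ) hα 0

lemma defect_mem (hα : α ≠ 0) (hL : A.MapsLModMY θ α) (n : ℤ) : A.defect θ α n ∈ A.spanMY := by
  have h : A.defect θ α n = ((α : ℂ) ^ n)⁻¹ • (θ.toFun (A.L n) - (α : ℂ) ^ n • A.L (-n)) := by
    rw [smul_sub, inv_smul_smul₀ (zpow_ne_zero _ (by exact_mod_cast hα)), defect]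
  exact h ▸ smul_mem _ _ (hL n)

lemma defect_cocycle (hα : α ≠ 0) (m n : ℤ) :
    ((n : ℂ) - m) • A.defect θ α (m + n)
        + (if m + n = 0 then ((m : ℂ) ^ 3 - m) / 12 else 0) • (θ.toFun A.c - A.c)
      = ⁅A.L (-n), A.defect θ α m⁆ - ⁅A.L (-m), A.defect θ α n⁆
        + ⁅A.defect θ α n, A.defect θ α m⁆ := by
  have hα0 : (α : ℂ) ≠ 0 := by exact_mod_cast hα
  have h := θ.map_bracket' (A.L m) (A.L n)
  rw [A.bracket_LL, θ.map_add', θ.map_smul', θ.map_smul', map_L hα, map_L hα, map_L hα,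
    lie_smul, smul_lie, lie_add, add_lie, add_lie, A.bracket_LL (-n) (-m)] at h
  by_cases hmn : m + n = 0
  · obtain rfl : n = -m := by omega
    simp [smul_inv_smul₀ (zpow_ne_zero m hα0), map_ofNat] at h ⊢
    rw [← lie_skew (A.defect θ α (-m)) (A.L (-m))] at h
    linear_combination (norm := module) h
  · simp [hmn, show ¬-n + -m = 0 by omega, zpow_add₀ hα0] at h ⊢
    rw [← lie_skew (A.defect θ α n) (A.L (-m))] at h
    refine smul_right_injective sv (mul_ne_zero (zpow_ne_zero m hα0) (zpow_ne_zero n hα0)) ?_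
    linear_combination (norm := module) h

lemma map_Y_mem (hα : α ≠ 0) (hL : A.MapsLModMY θ α) (n : ℤ) :
    θ.toFun (A.Y n) ∈ A.spanMY := by
  refine A.mem_spanMY_of_lie_L_zero_add_smul_mem n ?_
  have h := θ.map_bracket' (A.L 0) (A.Y n)
  rw [A.bracket_LY, θ.map_smul', map_L_zero hα, lie_add] at h
  have h' : ⁅A.L 0, θ.toFun (A.Y n)⁆ + ((n : ℂ) + 1 / 2) • θ.toFun (A.Y n) =
      ⁅θ.toFun (A.Y n), A.defect θ α 0⁆ := by
    simp [map_ofNat] at h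
    rw [one_div, h, ← lie_skew]
    abel
  exact h' ▸ A.lie_mem_spanMY _ (defect_mem hα hL 0)

lemma map_M_one_mem (hα : α ≠ 0) (hL : A.MapsLModMY θ α) :
    θ.toFun (A.M 1) ∈ A.spanM := by
  have h : A.M 1 = (2 : ℂ)⁻¹ • ⁅A.Y (-1), A.Y 1⁆ := by
    rw [A.bracket_YY, smul_smul]
    norm_num
  rw [h, θ.map_smul', θ.map_bracket']
  exact smul_mem _ _ (A.lie_mem_spanM (map_Y_mem hα hL 1) (map_Y_mem hα hL (-1)))

lemma map_M_one_eq (hα : α ≠ 0) (hL : A.MapsLModMY θ α) :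
    θ.toFun (A.M 1) = A.basis.repr (θ.toFun (A.M 1)) (.M (-1)) • A.M (-1) := by
  have hM1 := map_M_one_mem hα hL
  refine A.eq_smul_M_of_lie_L_zero_eq_smul (A.spanM_le_spanMY hM1) ?_
  have h := θ.map_bracket' (A.L 0) (A.M 1)
  rw [A.bracket_LM, map_L_zero hα, lie_add,
    A.lie_eq_zero_of_mem_spanM hM1 (defect_mem hα hL 0)] at h
  simp at h
  rw [← lie_skew, ← h]
  simp

lemma exists_map_M (hα : α ≠ 0) (hL : A.MapsLModMY θ α) :
    ∃ μ : ℂ, ∀ n : ℤ, θ.toFun (A.M n) = (μ * (α : ℂ) ^ n) • A.M (-n) := by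
  refine ⟨A.basis.repr (θ.toFun (A.M 1)) (.M (-1)) * (α : ℂ)⁻¹, fun n => ?_⟩
  have h := θ.map_bracket' (A.L (n - 1)) (A.M 1)
  rw [A.bracket_LM, sub_add_cancel, map_L hα, map_M_one_eq hα hL, smul_lie, lie_smul, lie_add,
    A.lie_eq_zero_of_mem_spanM (A.M_mem_spanM _) (defect_mem hα hL _), ← lie_skew,
    A.bracket_LM, show -(n - 1) + -1 = -n by ring] at h
  simp at h
  rw [h, smul_smul, zpow_sub_one₀ (by exact_mod_cast hα)]
  congr 1
  ring

lemma map_c_sub_mem (hα : α ≠ 0) (hL : A.MapsLModMY θ α) :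
    θ.toFun A.c - A.c ∈ A.spanMY := by
  have h := defect_cocycle (A := A) (θ := θ) hα 2 (-2)
  norm_num at h
  have h' : θ.toFun A.c - A.c = (2 : ℂ) • (⁅A.L 2, A.defect θ α 2⁆ - ⁅A.L (-2), A.defect θ α (-2)⁆
      + ⁅A.defect θ α (-2), A.defect θ α 2⁆ + (4 : ℂ) • A.defect θ α 0) := by
    rw [← h]
    module
  rw [h']
  refine smul_mem _ _ (add_mem (add_mem (sub_mem ?_ ?_) ?_) (smul_mem _ _ (defect_mem hα hL 0)))
  · exact A.lie_mem_spanMY _ (defect_mem hα hL 2)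
  · exact A.lie_mem_spanMY _ (defect_mem hα hL (-2))
  · exact A.lie_mem_spanMY _ (defect_mem hα hL 2)

lemma lie_L_zero_map_c : ⁅A.L 0, θ.toFun A.c⁆ = 0 := by
  have h := θ.map_bracket' (θ.toFun (A.L 0)) A.c
  rw [A.bracket_c, θ.invol', θ.map_zero] at h
  rw [← lie_skew, ← h, neg_zero]

lemma map_c_sub_eq (hα : α ≠ 0) (hL : A.MapsLModMY θ α) :
    θ.toFun A.c - A.c = A.basis.repr (θ.toFun A.c - A.c) (.M 0) • A.M 0 := by
  refine A.eq_smul_M_of_lie_L_zero_eq_smul (map_c_sub_mem hα hL) ?_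
  rw [lie_sub, lie_L_zero_map_c, A.bracket_c]
  simp

lemma exists_defect_sub_mem_spanM (hα : α ≠ 0) (hL : A.MapsLModMY θ α) :
    ∃ g ∈ A.spanY, ∀ n : ℤ, A.defect θ α n - (2 : ℂ) • ⁅A.L (-n), g⁆ ∈ A.spanM := by
  obtain ⟨g, hg, hgY⟩ := A.exists_mem_spanY_repr_Y_eq (A.defect θ α 0)
  refine ⟨g, hg, fun n => A.mem_spanM_iff.mpr ?_⟩
  have hmem : A.defect θ α n - (2 : ℂ) • ⁅A.L (-n), g⁆ ∈ A.spanMY :=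
    sub_mem (defect_mem hα hL n) (smul_mem _ _ (A.lie_mem_spanMY _ (A.spanY_le_spanMY hg)))
  rintro (j | j | k | _) hi
  · exact A.mem_spanMY_iff.mp hmem _ (by simp)
  · simp at hi
  · have h := congr_arg (A.basis.repr · (.Y k)) (defect_cocycle (A := A) (θ := θ) hα 0 n)
    have hY0 := A.mem_spanM_iff.mp (A.lie_mem_spanM (defect_mem hα hL n) (defect_mem hα hL 0))
      (.Y k) (by simp)
    simp only [map_add, map_sub, map_smul, Finsupp.add_apply, Finsupp.sub_apply,
      Finsupp.smul_apply, smul_eq_mul, repr_lie_L_Y, hY0, sub_neg_eq_add, hgY] at h ⊢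
    norm_num at h
    refine mul_left_cancel₀ (intCast_add_half_ne_zero (k + n)) ?_
    push_cast at h ⊢
    linear_combination h
  · exact A.mem_spanMY_iff.mp hmem _ (by simp)

variable (A) in
noncomputable def defectCoeff (θ : ConjAntiInvolution sv) (α : ℝ) (n : ℤ) : ℂ :=
  A.basis.repr (A.defect θ α n) (.M (-n))

lemma defectCoeff_relation (hα : α ≠ 0) {g : sv} (hg : g ∈ A.spanMY)
    (hgv : ∀ n : ℤ, A.defect θ α n - (2 : ℂ) • ⁅A.L (-n), g⁆ ∈ A.spanM) (m n : ℤ) :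
    ((n : ℂ) - m) * A.defectCoeff θ α (m + n)
        + (if m + n = 0 then ((m : ℂ) ^ 3 - m) / 12 else 0)
          * A.basis.repr (θ.toFun A.c - A.c) (.M (-(m + n)))
      = n * A.defectCoeff θ α n - m * A.defectCoeff θ α m + 4 * A.bracketForm (-n) (-m) g g := by
  have hvv : ⁅A.defect θ α n, A.defect θ α m⁆ = (4 : ℂ) • ⁅⁅A.L (-n), g⁆, ⁅A.L (-m), g⁆⁆ := by
    rw [A.lie_eq_of_sub_mem_spanM (smul_mem _ _ (A.lie_mem_spanMY _ hg))
      (smul_mem _ _ (A.lie_mem_spanMY _ hg)) (hgv n) (hgv m), lie_smul, smul_lie, smul_smul]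
    norm_num
  have h := congr_arg (A.basis.repr · (.M (-(m + n)))) (defect_cocycle (A := A) (θ := θ) hα m n)
  simp only [map_add, map_sub, map_smul, Finsupp.add_apply, Finsupp.sub_apply,
    Finsupp.smul_apply, smul_eq_mul, repr_lie_L_M, hvv] at h
  rw [show -(m + n) - -n = -m by ring, show -(m + n) - -m = -n by ring,
    show -(m + n) = -n + -m by ring] at h
  rw [defectCoeff, defectCoeff, defectCoeff, bracketForm_apply, show -(m + n) = -n + -m by ring,
    map_sub, Finsupp.sub_apply]
  push_cast at h
  linear_combination h

lemma map_c (hα : α ≠ 0) (hL : A.MapsLModMY θ α) :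
    θ.toFun A.c = A.c := by
  suffices hβ : A.basis.repr (θ.toFun A.c - A.c) (.M 0) = 0 by
    rw [← sub_eq_zero, map_c_sub_eq hα hL, hβ, zero_smul]
  obtain ⟨g, hg, hgv⟩ := exists_defect_sub_mem_spanM hα hL
  have e := defectCoeff_relation hα (A.spanY_le_spanMY hg) hgv
  generalize A.basis.repr (θ.toFun A.c - A.c) = r at e ⊢
  have e12 := e 1 2
  have e13 := e (-1) 3
  have e21 := e (-1) (-2)
  have e31 := e 1 (-3)
  have e11 := e 1 (-1)
  have e22 := e 2 (-2)
  have hF := A.obstructionForm_self_eq_zero hg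
  simp only [obstructionForm, LinearMap.add_apply, LinearMap.sub_apply, LinearMap.smul_apply,
    smul_eq_mul] at hF
  norm_num at e12 e13 e21 e31 e11 e22
  linear_combination 2 * (e22 + 3 * e12 + e13 - 3 * e21 - e31 - 2 * e11) + 8 * hF

end Involution

end SVAlgebra

variable {sv : Type*} [LieRing sv] [LieAlgebra ℂ sv]

/-- If `θ(L_n) ≡ αⁿ·L_{−n} (mod M ⊕ Y)` for all `n`, then `θ(c) = c` and
`θ(M_n) = μ·αⁿ·M_{−n}` for some `μ` of modulus one. -/
theorem sv_antiInvolution_on_M_and_c (A : SVAlgebra sv) (θ : ConjAntiInvolution sv)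
    (α : ℝ) (hα : α ≠ 0)
    (hL : ∀ n : ℤ, θ.toFun (A.L n) - ((α : ℂ) ^ n) • A.L (-n) ∈
        Submodule.span ℂ (Set.range A.M ∪ Set.range A.Y)) :
    θ.toFun A.c = A.c ∧
    ∃ μ : ℂ, ‖μ‖ = 1 ∧
      ∀ n : ℤ, θ.toFun (A.M n) = (μ * (α : ℂ) ^ n) • A.M (-n) := by
  obtain ⟨μ, hμ⟩ := SVAlgebra.exists_map_M hα hL
  refine ⟨SVAlgebra.map_c hα hL, μ, θ.norm_eq_one_of_map_eq_smul (A.M_ne_zero 0) ?_, hμ⟩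
  simpa using hμ 0
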